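/- Let m and n be integers greater than 1 such that p = gcd(m,n) is an odd prime and gcd(p·m, n) = gcd(m, p·n) = p. Then τ(T_{m×n}) = τ(T_{p×p}). -/

import Mathlib

/-- Projection `π_{m,n} : ℤ×ℤ → (ℤ/mℤ)×(ℤ/nℤ)`. -/
def torusProj (m n : ℕ) (P : ℤ × ℤ) : ZMod m × ZMod n :=
  ((P.1 : ZMod m), (P.2 : ZMod n))

/-- `L` is a line on the discrete torus `T_{m×n}`: the image under `π_{m,n}`
of `{(a+uk, b+vk) : k ∈ ℤ}` with `gcd(u,v)=1`. -/
def IsTorusLine (m n : ℕ) (L : Set (ZMod m × ZMod n)) : Prop :=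
  ∃ a b u v : ℤ, Int.gcd u v = 1 ∧
    L = torusProj m n '' {P : ℤ × ℤ | ∃ k : ℤ, P = (a + u * k, b + v * k)}

/-- `X` satisfies the no-three-in-line condition on `T_{m×n}`:
no three distinct points of `X` lie on a common line. -/
def NoThreeInLine (m n : ℕ) (X : Set (ZMod m × ZMod n)) : Prop :=
  ∀ L : Set (ZMod m × ZMod n), IsTorusLine m n L →
    ∀ A ∈ X, ∀ B ∈ X, ∀ C ∈ X,
      A ∈ L → B ∈ L → C ∈ L → A = B ∨ A = C ∨ B = C

/-- `τ(T_{m×n})`: the maximum cardinality of a subset of `T_{m×n}`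
satisfying the no-three-in-line condition. -/
noncomputable def tau (m n : ℕ) : ℕ :=
  sSup {k : ℕ | ∃ X : Set (ZMod m × ZMod n), NoThreeInLine m n X ∧ X.ncard = k}

/-- The reduction map `ρ : T_{m×n} → T_{p×p}` (for `p ∣ m`, `p ∣ n`). -/
def torusRed (m n p : ℕ) (hm : p ∣ m) (hn : p ∣ n)
    (q : ZMod m × ZMod n) : ZMod p × ZMod p :=
  (ZMod.castHom hm (ZMod p) q.1, ZMod.castHom hn (ZMod p) q.2)

/-- The determinant `D(A,B,C)` with rows `(1,1,1)`, x-coords, y-coords. -/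
def detD (A B C : ℤ × ℤ) : ℤ :=
  Matrix.det !![1, 1, 1; A.1, B.1, C.1; A.2, B.2, C.2]
/-!
Write `m = p m'` and `n = p n'` with `p`, `m'`, `n'` pairwise coprime. The reduction
`ρ : T_{m×n} → T_{p×p}` reflects collinearity: if `ρ A, ρ B, ρ C` lie on the line
`k ↦ (a + u k, b + v k)`, the Chinese remainder theorem gives a line on `T_{m×n}` that reduces to
it mod `p` and is `k ↦ (k, k)` mod `(m', n')`, and parameters `κ` hitting the lifts of `A, B, C`.
Hence `ρ` maps a no-three-in-line set either injectively onto such a set, or the set has just two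
points; in the other direction any section of `ρ` maps no-three-in-line sets to such sets.
-/

def TorusCollinear (m n : ℕ) (A B C : ZMod m × ZMod n) : Prop :=
  ∃ L : Set (ZMod m × ZMod n), IsTorusLine m n L ∧ A ∈ L ∧ B ∈ L ∧ C ∈ L

section Torus

variable {m n : ℕ}

theorem noThreeInLine_iff_torusCollinear {X : Set (ZMod m × ZMod n)} :
    NoThreeInLine m n X ↔
      ∀ A ∈ X, ∀ B ∈ X, ∀ C ∈ X, TorusCollinear m n A B C → A = B ∨ A = C ∨ B = C :=
  ⟨fun h A hA B hB C hC ⟨L, hL, hAL, hBL, hCL⟩ => h L hL A hA B hB C hC hAL hBL hCL,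
    fun h L hL A hA B hB C hC hAL hBL hCL => h A hA B hB C hC ⟨L, hL, hAL, hBL, hCL⟩⟩

theorem torusProj_surjective : Function.Surjective (torusProj m n) := fun q =>
  let ⟨x, hx⟩ := ZMod.intCast_surjective q.1
  let ⟨y, hy⟩ := ZMod.intCast_surjective q.2
  ⟨(x, y), Prod.ext hx hy⟩

theorem torusProj_eq_torusProj_iff {P Q : ℤ × ℤ} :
    torusProj m n P = torusProj m n Q ↔ P.1 ≡ Q.1 [ZMOD m] ∧ P.2 ≡ Q.2 [ZMOD n] := by
  simp only [torusProj, Prod.ext_iff, ZMod.intCast_eq_intCast_iff]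

theorem exists_gcd_eq_one_mul_eq (u v : ℤ) :
    ∃ u₀ v₀ g : ℤ, Int.gcd u₀ v₀ = 1 ∧ u = u₀ * g ∧ v = v₀ * g := by
  rcases (Int.gcd u v).eq_zero_or_pos with h | h
  · obtain ⟨rfl, rfl⟩ := Int.gcd_eq_zero_iff.1 h
    exact ⟨1, 0, 0, by simp, by simp, by simp⟩
  · obtain ⟨u₀, v₀, hg, hu, hv⟩ := Int.exists_gcd_one h
    exact ⟨u₀, v₀, _, hg, hu, hv⟩

/-- The line through three collinear points may be taken with an arbitrary direction `(u, v)`,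
since dividing out `gcd u v` only reparametrizes it. -/
theorem torusCollinear_iff_exists_param {A B C : ZMod m × ZMod n} :
    TorusCollinear m n A B C ↔ ∃ a b u v k₁ k₂ k₃ : ℤ,
      A = torusProj m n (a + u * k₁, b + v * k₁) ∧
      B = torusProj m n (a + u * k₂, b + v * k₂) ∧
      C = torusProj m n (a + u * k₃, b + v * k₃) := by
  constructor
  · rintro ⟨_, ⟨a, b, u, v, -, rfl⟩, ⟨_, ⟨k₁, rfl⟩, rfl⟩, ⟨_, ⟨k₂, rfl⟩, rfl⟩,
      ⟨_, ⟨k₃, rfl⟩, rfl⟩⟩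
    exact ⟨a, b, u, v, k₁, k₂, k₃, rfl, rfl, rfl⟩
  · rintro ⟨a, b, u, v, k₁, k₂, k₃, rfl, rfl, rfl⟩
    obtain ⟨u₀, v₀, g, hg, rfl, rfl⟩ := exists_gcd_eq_one_mul_eq u v
    have mem : ∀ k : ℤ, torusProj m n (a + u₀ * g * k, b + v₀ * g * k) ∈
        torusProj m n '' {P : ℤ × ℤ | ∃ k : ℤ, P = (a + u₀ * k, b + v₀ * k)} :=
      fun k => ⟨_, ⟨g * k, by simp only [mul_assoc]⟩, rfl⟩
    exact ⟨_, ⟨a, b, u₀, v₀, hg, rfl⟩, mem k₁, mem k₂, mem k₃⟩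

theorem torusCollinear_self_left (P Q : ZMod m × ZMod n) : TorusCollinear m n P P Q := by
  obtain ⟨⟨x₁, y₁⟩, rfl⟩ := torusProj_surjective P
  obtain ⟨⟨x₂, y₂⟩, rfl⟩ := torusProj_surjective Q
  exact torusCollinear_iff_exists_param.2
    ⟨x₁, y₁, x₂ - x₁, y₂ - y₁, 0, 0, 1, by simp, by simp, by simp⟩

theorem noThreeInLine_pair (P Q : ZMod m × ZMod n) : NoThreeInLine m n {P, Q} := by
  rintro L - A hA B hB C hC - - -
  rcases hA with rfl | rfl <;> rcases hB with rfl | rfl <;> rcases hC with rfl | rfl <;> simp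

theorem NoThreeInLine.image {m' n' : ℕ} {X : Set (ZMod m × ZMod n)}
    {f : ZMod m × ZMod n → ZMod m' × ZMod n'}
    (hf : ∀ A B C, TorusCollinear m' n' (f A) (f B) (f C) → TorusCollinear m n A B C)
    (hX : NoThreeInLine m n X) : NoThreeInLine m' n' (f '' X) := by
  rw [noThreeInLine_iff_torusCollinear] at hX ⊢
  rintro _ ⟨A, hA, rfl⟩ _ ⟨B, hB, rfl⟩ _ ⟨C, hC, rfl⟩ hABC
  rcases hX A hA B hB C hC (hf A B C hABC) with h | h | h <;> simp [h]

end Torus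

theorem exists_int_modEq_and_modEq {a b : ℕ} (h : a.Coprime b) (r s : ℤ) :
    ∃ z : ℤ, z ≡ r [ZMOD a] ∧ z ≡ s [ZMOD b] := by
  obtain ⟨x, y, hxy⟩ := Nat.isCoprime_iff_coprime.2 h
  refine ⟨s * x * a + r * y * b, Int.modEq_iff_dvd.2 ⟨(r - s) * x, ?_⟩,
    Int.modEq_iff_dvd.2 ⟨(s - r) * y, ?_⟩⟩
  · linear_combination (-r) * hxy
  · linear_combination (-s) * hxy

/-- An affine map `k ↦ a + u k` mod `p` extends to one mod `p q` that is `κ ↦ κ` mod `q`. -/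
theorem exists_affine_lift {p q : ℕ} (h : p.Coprime q) (a u : ℤ) :
    ∃ a' u' : ℤ, ∀ k κ x : ℤ, a + u * k ≡ x [ZMOD p] → κ ≡ k [ZMOD p] → κ ≡ x [ZMOD q] →
      a' + u' * κ ≡ x [ZMOD (p * q : ℕ)] := by
  obtain ⟨a', ha'p, ha'q⟩ := exists_int_modEq_and_modEq h a 0
  obtain ⟨u', hu'p, hu'q⟩ := exists_int_modEq_and_modEq h u 1
  refine ⟨a', u', fun k κ x hx hκp hκq => ?_⟩
  rw [Nat.cast_mul, ← Int.modEq_and_modEq_iff_modEq_mul (by simpa using h)]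
  refine ⟨(ha'p.add (hu'p.mul hκp)).trans hx, ?_⟩
  calc a' + u' * κ ≡ 0 + 1 * κ [ZMOD q] := ha'q.add (hu'q.mul rfl)
    _ = κ := by ring
    _ ≡ x [ZMOD q] := hκq

section Reduction

variable {m n p : ℕ} (dm : p ∣ m) (dn : p ∣ n)

theorem torusRed_torusProj (P : ℤ × ℤ) :
    torusRed m n p dm dn (torusProj m n P) = torusProj p p P :=
  Prod.ext (map_intCast _ P.1) (map_intCast _ P.2)

theorem torusRed_surjective : Function.Surjective (torusRed m n p dm dn) := fun q =>
  let ⟨P, hP⟩ := torusProj_surjective q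
  ⟨torusProj m n P, (torusRed_torusProj dm dn P).trans hP⟩

theorem TorusCollinear.torusRed {A B C : ZMod m × ZMod n} (h : TorusCollinear m n A B C) :
    TorusCollinear p p (torusRed m n p dm dn A) (torusRed m n p dm dn B)
      (torusRed m n p dm dn C) := by
  obtain ⟨a, b, u, v, k₁, k₂, k₃, rfl, rfl, rfl⟩ := torusCollinear_iff_exists_param.1 h
  simp only [torusRed_torusProj]
  exact torusCollinear_iff_exists_param.2 ⟨a, b, u, v, k₁, k₂, k₃, rfl, rfl, rfl⟩

end Reduction

theorem exists_noThreeInLine_lift_ncard_eq {m n p : ℕ} (dm : p ∣ m) (dn : p ∣ n)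
    {Y : Set (ZMod p × ZMod p)} (hY : NoThreeInLine p p Y) :
    ∃ X : Set (ZMod m × ZMod n), NoThreeInLine m n X ∧ X.ncard = Y.ncard := by
  obtain ⟨s, hs⟩ := (torusRed_surjective dm dn).hasRightInverse
  refine ⟨s '' Y, hY.image fun A B C h => ?_, Set.ncard_image_of_injective Y hs.injective⟩
  simpa only [hs _] using h.torusRed dm dn

theorem torusCollinear_of_torusRed {p m' n' : ℕ} (hpm : p.Coprime m') (hpn : p.Coprime n')
    (hmn : m'.Coprime n') (dm : p ∣ p * m') (dn : p ∣ p * n')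
    {A B C : ZMod (p * m') × ZMod (p * n')}
    (h : TorusCollinear p p (torusRed _ _ p dm dn A) (torusRed _ _ p dm dn B)
      (torusRed _ _ p dm dn C)) :
    TorusCollinear (p * m') (p * n') A B C := by
  obtain ⟨a, b, u, v, k₁, k₂, k₃, hA, hB, hC⟩ := torusCollinear_iff_exists_param.1 h
  obtain ⟨a', u', hx⟩ := exists_affine_lift hpm a u
  obtain ⟨b', v', hy⟩ := exists_affine_lift hpn b v
  have lift : ∀ Z k, torusRed _ _ p dm dn Z = torusProj p p (a + u * k, b + v * k) →
      ∃ κ : ℤ, Z = torusProj _ _ (a' + u' * κ, b' + v' * κ) := by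
    intro Z k hZ
    obtain ⟨⟨x, y⟩, rfl⟩ := torusProj_surjective Z
    rw [torusRed_torusProj, torusProj_eq_torusProj_iff] at hZ
    obtain ⟨w, hwx, hwy⟩ := exists_int_modEq_and_modEq hmn x y
    obtain ⟨κ, hκk, hκw⟩ := exists_int_modEq_and_modEq (hpm.mul_right hpn) k w
    rw [Nat.cast_mul] at hκw
    refine ⟨κ, torusProj_eq_torusProj_iff.2 ⟨?_, ?_⟩⟩
    · exact (hx k κ x hZ.1.symm hκk ((hκw.of_mul_right _).trans hwx)).symm
    · exact (hy k κ y hZ.2.symm hκk ((hκw.of_mul_left _).trans hwy)).symm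
  obtain ⟨κ₁, rfl⟩ := lift A k₁ hA
  obtain ⟨κ₂, rfl⟩ := lift B k₂ hB
  obtain ⟨κ₃, rfl⟩ := lift C k₃ hC
  exact torusCollinear_iff_exists_param.2 ⟨a', b', u', v', κ₁, κ₂, κ₃, rfl, rfl, rfl⟩

theorem exists_noThreeInLine_reduction_ncard_eq {p m' n' : ℕ} (hp : 1 < p) (hpm : p.Coprime m')
    (hpn : p.Coprime n') (hmn : m'.Coprime n') {X : Set (ZMod (p * m') × ZMod (p * n'))}
    (hX : NoThreeInLine _ _ X) :
    ∃ Y : Set (ZMod p × ZMod p), NoThreeInLine p p Y ∧ Y.ncard = X.ncard := by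
  have dm : p ∣ p * m' := dvd_mul_right p m'
  have dn : p ∣ p * n' := dvd_mul_right p n'
  have lift : ∀ A B C, TorusCollinear p p (torusRed _ _ p dm dn A) (torusRed _ _ p dm dn B)
      (torusRed _ _ p dm dn C) → TorusCollinear _ _ A B C :=
    fun _ _ _ => torusCollinear_of_torusRed hpm hpn hmn dm dn
  by_cases hinj : Set.InjOn (torusRed _ _ p dm dn) X
  · exact ⟨_, hX.image lift, hinj.ncard_image⟩
  obtain ⟨A, hA, B, hB, hAB, hne⟩ : ∃ A ∈ X, ∃ B ∈ X,
      torusRed _ _ p dm dn A = torusRed _ _ p dm dn B ∧ A ≠ B := by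
    simpa [Set.InjOn] using hinj
  -- Any third point `C` would be collinear with `A` and `B`, as their reductions are.
  have hX_eq : X = {A, B} := by
    refine (Set.insert_subset hA (Set.singleton_subset_iff.2 hB)).antisymm' fun C hC => ?_
    have hABC := lift A B C (hAB ▸ torusCollinear_self_left _ _)
    rcases noThreeInLine_iff_torusCollinear.1 hX A hA B hB C hC hABC with h | rfl | rfl
    · exact absurd h hne
    · exact Set.mem_insert _ _
    · exact Set.mem_insert_of_mem _ rfl
  have : Fact (1 < p) := ⟨hp⟩
  refine ⟨{(0, 0), (1, 0)}, noThreeInLine_pair _ _, ?_⟩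
  rw [hX_eq, Set.ncard_pair hne, Set.ncard_pair (by simp)]

theorem exists_coprime_cofactors {m n p : ℕ} (hp : 0 < p) (h1 : Nat.gcd (p * m) n = p)
    (h2 : Nat.gcd m (p * n) = p) :
    ∃ m' n', m = p * m' ∧ n = p * n' ∧ p.Coprime m' ∧ p.Coprime n' ∧ m'.Coprime n' := by
  obtain ⟨m', rfl⟩ : p ∣ m := h2 ▸ Nat.gcd_dvd_left _ _
  obtain ⟨n', rfl⟩ : p ∣ n := h1 ▸ Nat.gcd_dvd_right _ _
  rw [Nat.gcd_mul_left, Nat.mul_eq_left hp.ne'] at h1 h2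
  exact ⟨m', n', rfl, rfl, (Nat.Coprime.coprime_mul_right_right h2).symm,
    Nat.Coprime.coprime_mul_right h1, Nat.Coprime.coprime_mul_left h1⟩

theorem tau_eq_tau_gcd_general (m n p : ℕ) (hp : p.Prime)
    (h1 : Nat.gcd (p * m) n = p) (h2 : Nat.gcd m (p * n) = p) :
    tau m n = tau p p := by
  obtain ⟨m', n', rfl, rfl, hpm, hpn, hmn⟩ := exists_coprime_cofactors hp.pos h1 h2
  unfold tau
  congr 1
  ext k
  constructor
  · rintro ⟨X, hX, rfl⟩
    exact exists_noThreeInLine_reduction_ncard_eq hp.one_lt hpm hpn hmn hX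
  · rintro ⟨Y, hY, rfl⟩
    exact exists_noThreeInLine_lift_ncard_eq (dvd_mul_right p m') (dvd_mul_right p n') hY

/-- Theorem 4.5: if p = gcd(m,n) is an odd prime with
gcd(pm,n) = gcd(m,pn) = p, then τ(T_{m×n}) = τ(T_{p×p}). -/
theorem tau_eq_tau_gcd (m n p : ℕ) (hm : 1 < m) (hn : 1 < n)
    (hgcd : Nat.gcd m n = p) (hp : p.Prime) (hodd : Odd p)
    (h1 : Nat.gcd (p * m) n = p) (h2 : Nat.gcd m (p * n) = p) :
    tau m n = tau p p :=
  tau_eq_tau_gcd_general m n p hp h1 h2
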